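/- Let μ, ν > 0 and define a = 2μ²ν + 4μ² + 2μν² + 12μν + 9ν², b = -(2μ²ν + 2μ² + 2μν² + 7μν + 6ν²), c = 2μ²ν + μ² + 2μν² + 4μν + 4ν². Then a > 0, c > 0, and a·c ≥ b², so the 2×2 matrix [[a, b], [b, c]] is positive semidefinite. -/

import Mathlib

lemma quad_nonneg {a b c x y : ℝ} (ha : 0 < a) (h : b ^ 2 ≤ a * c) :
    0 ≤ a * x ^ 2 + 2 * b * x * y + c * y ^ 2 := by
  nlinarith [sq_nonneg (a * x + b * y), sq_nonneg y, mul_pos ha ha]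

/-- The 2×2 coefficient block of the event-camera Fisher information matrix is
positive semidefinite. -/
theorem fisher_block_posSemidef (μ ν : ℝ) (hμ : 0 < μ) (hν : 0 < ν) :
    let a : ℝ := 2*μ^2*ν + 4*μ^2 + 2*μ*ν^2 + 12*μ*ν + 9*ν^2
    let b : ℝ := -(2*μ^2*ν + 2*μ^2 + 2*μ*ν^2 + 7*μ*ν + 6*ν^2)
    let c : ℝ := 2*μ^2*ν + μ^2 + 2*μ*ν^2 + 4*μ*ν + 4*ν^2
    0 < a ∧ 0 < c ∧ b ^ 2 ≤ a * c ∧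
      Matrix.PosSemidef (Matrix.of ![![a, b], ![b, c]]) := by
  intro a b c
  have ha : 0 < a := by positivity
  have hc : 0 < c := by positivity
  have hd : b ^ 2 ≤ a * c := by
    simp only [a, b, c]
    nlinarith [sq_nonneg (μ - ν), sq_nonneg (μ*ν), mul_pos hμ hν, sq_nonneg μ, sq_nonneg ν,
      mul_pos (mul_pos hμ hν) hν, mul_pos (mul_pos hμ hν) hμ]
  refine ⟨ha, hc, hd, ?_⟩
  refine Matrix.PosSemidef.of_dotProduct_mulVec_nonneg ?_ ?_
  · ext i j
    fin_cases i <;> fin_cases j <;> simp [Matrix.conjTranspose_apply]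
  · intro x
    have := quad_nonneg (x := x 0) (y := x 1) ha hd
    simp only [dotProduct, Matrix.mulVec, Fin.sum_univ_two, Matrix.of_apply,
      RCLike.star_def, starRingEnd_apply, star_trivial]
    simp only [dotProduct, Fin.sum_univ_two, Matrix.cons_val', Matrix.cons_val_zero,
      Matrix.cons_val_one, Matrix.head_cons, Matrix.empty_val', Matrix.cons_val_fin_one,
      Matrix.head_fin_const]
    nlinarith [this]
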